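/- arXiv:1608.00295 — 3 statements merged into one kernel-verified Lean document; each statement's English description precedes it below -/
import Mathlib

section
/- For λ ≥ 1 and z ≥ 0, the function λ ↦ −z√λ + λ(e^{z/√λ} − 1) is non-increasing in λ; equivalently, its supremum over λ ≥ 1 equals e^z − 1 − z. -/
/-!
In the variable `s = √λ` the function is `G s = -z s + s² (e^{z/s} - 1)`, whose derivative is
`s (2 (e^t - 1) - t (e^t + 1))` with `t = z / s`. This is nonpositive because
`2 (e^t - 1) ≤ t (e^t + 1)` for `t ≥ 0` (that is, `tanh (t/2) ≤ t/2`), so the function decreases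
in `λ` and its supremum over `λ ≥ 1` is its value `e^z - 1 - z` at `λ = 1`.
-/

open Real Set

theorem exp_le_one_add_mul_exp (t : ℝ) : exp t ≤ 1 + t * exp t := by
  have h := mul_le_mul_of_nonneg_right (add_one_le_exp (-t)) (exp_pos t).le
  rw [← exp_add, neg_add_cancel, exp_zero] at h
  linarith

theorem monotone_mul_exp_add_one_sub_two_mul_exp_sub_one :
    Monotone fun t : ℝ => t * (exp t + 1) - 2 * (exp t - 1) := by
  refine monotone_of_hasDerivAt_nonneg (f' := fun t => 1 + t * exp t - exp t) (fun t => ?_)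
    (fun t => by simpa using exp_le_one_add_mul_exp t)
  refine (((hasDerivAt_id' t).mul ((hasDerivAt_exp t).add_const 1)).sub
    (((hasDerivAt_exp t).sub_const 1).const_mul 2)).congr_deriv ?_
  ring

theorem two_mul_exp_sub_one_le {t : ℝ} (ht : 0 ≤ t) : 2 * (exp t - 1) ≤ t * (exp t + 1) := by
  have := monotone_mul_exp_add_one_sub_two_mul_exp_sub_one ht
  simp only [exp_zero] at this
  linarith

noncomputable def poissonLogMGFSqrt (z s : ℝ) : ℝ := -z * s + s ^ 2 * (exp (z / s) - 1)

theorem hasDerivAt_poissonLogMGFSqrt (z : ℝ) {s : ℝ} (hs : s ≠ 0) :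
    HasDerivAt (poissonLogMGFSqrt z)
      (s * (2 * (exp (z / s) - 1) - z / s * (exp (z / s) + 1))) s := by
  have hdiv : HasDerivAt (fun s => z / s) (-(z / s ^ 2)) s := by
    simpa [div_eq_mul_inv] using (hasDerivAt_inv hs).const_mul z
  refine (((hasDerivAt_id' s).const_mul (-z)).add
    ((hasDerivAt_pow 2 s).mul (hdiv.exp.sub_const 1))).congr_deriv ?_
  field_simp
  ring

theorem antitoneOn_poissonLogMGFSqrt {z : ℝ} (hz : 0 ≤ z) :
    AntitoneOn (poissonLogMGFSqrt z) (Ioi 0) := by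
  have hderiv (s : ℝ) (hs : s ∈ Ioi 0) := hasDerivAt_poissonLogMGFSqrt z (ne_of_gt hs)
  refine antitoneOn_of_hasDerivWithinAt_nonpos (convex_Ioi 0)
    (fun s hs => (hderiv s hs).continuousAt.continuousWithinAt)
    (by simpa only [interior_Ioi] using fun s hs => (hderiv s hs).hasDerivWithinAt) ?_
  simp only [interior_Ioi]
  intro s (hs : 0 < s)
  exact mul_nonpos_of_nonneg_of_nonpos hs.le
    (sub_nonpos.2 (two_mul_exp_sub_one_le (div_nonneg hz hs.le)))

theorem AntitoneOn.ciSup_Ici_eq {α β : Type*} [Preorder α] [ConditionallyCompleteLattice β]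
    {f : α → β} {a : α} (hf : AntitoneOn f (Ici a)) : ⨆ x : Ici a, f x = f a := by
  have hgreatest : IsGreatest (range fun x : Ici a => f x) (f a) :=
    ⟨⟨⟨a, self_mem_Ici⟩, rfl⟩, by rintro _ ⟨⟨x, hx⟩, rfl⟩; exact hf self_mem_Ici hx hx⟩
  exact hgreatest.isLUB.ciSup_eq

/-- For `z ≥ 0`, the function `λ ↦ −z√λ + λ(e^{z/√λ} − 1)` is non-increasing on `[1,∞)`,
and its supremum over `λ ≥ 1` equals `e^z − 1 − z`. -/
theorem poisson_log_mgf_antitone_and_sup (z : ℝ) (hz : 0 ≤ z) :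
    AntitoneOn (fun l : ℝ => -z * Real.sqrt l + l * (Real.exp (z / Real.sqrt l) - 1))
        (Ici 1)
      ∧ (⨆ l : Ici (1 : ℝ),
          (-z * Real.sqrt l + (l : ℝ) * (Real.exp (z / Real.sqrt l) - 1)))
        = Real.exp z - 1 - z := by
  have hsqrt : EqOn (poissonLogMGFSqrt z ∘ sqrt)
      (fun l : ℝ => -z * √l + l * (exp (z / √l) - 1)) (Ici 1) := fun l hl => by
    simp [poissonLogMGFSqrt, sq_sqrt (zero_le_one.trans hl)]
  have hanti : AntitoneOn (fun l : ℝ => -z * √l + l * (exp (z / √l) - 1)) (Ici 1) :=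
    ((antitoneOn_poissonLogMGFSqrt hz).comp_MonotoneOn (fun _ _ _ _ h => sqrt_le_sqrt h)
      fun _ hl => sqrt_pos.2 (zero_lt_one.trans_le hl)).congr hsqrt
  refine ⟨hanti, ?_⟩
  rw [hanti.ciSup_Ici_eq]
  simp only [sqrt_one, div_one]
  ring
end

section
/- Under the hypotheses above, sup_{x ∈ I} |E[f(S_n)] − f(x)| ≤ ∫_0^∞ ω_σ[f](z/√n) |dQ_ζ(z)|, where Q_ζ(u) = sup_m P( m^{-1/2} |∑_{i=1}^m ζ(i)| > u ) is the absolute tail function of ζ = (ξ_1 − x)/σ(x), and the integral is the Lebesgue–Stieltjes integral against the decreasing function Q_ζ. -/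
open Set MeasureTheory ProbabilityTheory

/-- The clamp of `y` onto `[a,b]`. -/
noncomputable def dtClamp (a b y : ℝ) : ℝ := max a (min b y)

/-- The Ditzian–Totik modulus of continuity. -/
noncomputable def dtMod (f σ : ℝ → ℝ) (a b δ : ℝ) : ℝ :=
  sSup ((fun p : ℝ × ℝ => |f (dtClamp a b (p.2 + p.1 * σ p.2)) - f p.2|) ''
    {p : ℝ × ℝ | |p.1| ≤ δ ∧ p.2 ∈ Icc a b})


/-!
Write `Sₙ - x = σ(x) W / n` with `W = ζ₁ + ⋯ + ζₙ` the sum of the standardized variables, so that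
`|f(Sₙ) - f(x)| ≤ ω_σ[f](Z / √n)` for `Z = |W| / √n`. Since `W` has the law of
`ζ(1) + ⋯ + ζ(n)`, `P(Z > u) ≤ Q_ζ(u)`, and `Q_ζ(u)` is the mass that `|dQ_ζ|` gives to `(u, ∞)`:
`Q_ζ` is positive because `ζ` is nondegenerate and `Q_ζ(u) ≤ u⁻²` by Chebyshev, so `-Q_ζ` tends
to `0`. As `z ↦ ω_σ[f](z / √n)` is monotone and
vanishes at `0`, the layer-cake formula turns this tail domination into
`E ω_σ[f](Z / √n) ≤ ∫₀^∞ ω_σ[f](z / √n) |dQ_ζ(z)|`.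
-/

open Filter Topology
open scoped ENNReal

section DitzianTotik

variable {f σ : ℝ → ℝ} {a b M : ℝ}

lemma dtClamp_mem (hab : a ≤ b) (y : ℝ) : dtClamp a b y ∈ Icc a b :=
  ⟨le_max_left _ _, max_le hab (min_le_left _ _)⟩

lemma dtClamp_of_mem {y : ℝ} (hy : y ∈ Icc a b) : dtClamp a b y = y := by
  rw [dtClamp, min_eq_right hy.2, max_eq_right hy.1]

lemma dtMod_set_le (hab : a ≤ b) (hfM : ∀ y ∈ Icc a b, |f y| ≤ M) (δ : ℝ) :
    ∀ v ∈ (fun p : ℝ × ℝ => |f (dtClamp a b (p.2 + p.1 * σ p.2)) - f p.2|) ''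
      {p : ℝ × ℝ | |p.1| ≤ δ ∧ p.2 ∈ Icc a b}, v ≤ 2 * M := by
  rintro v ⟨p, hp, rfl⟩
  linarith [abs_sub (f (dtClamp a b (p.2 + p.1 * σ p.2))) (f p.2),
    hfM _ (dtClamp_mem hab (p.2 + p.1 * σ p.2)), hfM _ hp.2]

lemma dtMod_nonneg (δ : ℝ) : 0 ≤ dtMod f σ a b δ :=
  Real.sSup_nonneg <| by rintro v ⟨p, -, rfl⟩; exact abs_nonneg _

lemma dtMod_zero : dtMod f σ a b 0 = 0 := by
  refine le_antisymm (Real.sSup_nonpos ?_) (dtMod_nonneg 0)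
  rintro v ⟨p, hp, rfl⟩
  dsimp only
  rw [abs_nonpos_iff.1 hp.1, zero_mul, add_zero, dtClamp_of_mem hp.2, sub_self, abs_zero]

lemma dtMod_mono (hab : a ≤ b) (hfM : ∀ y ∈ Icc a b, |f y| ≤ M) :
    Monotone (dtMod f σ a b) := by
  intro δ δ' hδ
  refine Real.sSup_le ?_ (dtMod_nonneg δ')
  rintro v ⟨p, hp, rfl⟩
  exact le_csSup ⟨_, dtMod_set_le hab hfM δ'⟩ ⟨p, ⟨hp.1.trans hδ, hp.2⟩, rfl⟩

lemma dtMod_le (hab : a ≤ b) (hfM : ∀ y ∈ Icc a b, |f y| ≤ M) (δ : ℝ) :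
    dtMod f σ a b δ ≤ 2 * M :=
  Real.sSup_le (dtMod_set_le hab hfM δ) (by linarith [abs_nonneg (f a), hfM a ⟨le_rfl, hab⟩])

lemma abs_sub_le_dtMod (hab : a ≤ b) (hfM : ∀ y ∈ Icc a b, |f y| ≤ M) {x y : ℝ}
    (hx : x ∈ Icc a b) (hy : y ∈ Icc a b) (hσ : 0 < σ x) :
    |f y - f x| ≤ dtMod f σ a b (|y - x| / σ x) := by
  have hy' : x + (y - x) / σ x * σ x = y := by field_simp; ring
  refine le_csSup ⟨_, dtMod_set_le hab hfM _⟩ ⟨((y - x) / σ x, x), ⟨?_, hx⟩, ?_⟩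
  · rw [abs_div, abs_of_pos hσ]
  · dsimp only
    rw [hy', dtClamp_of_mem hy]

end DitzianTotik

lemma sum_div_mem_Icc {n : ℕ} (hn : 0 < n) {y : Fin n → ℝ} {a b : ℝ}
    (hy : ∀ i, y i ∈ Icc a b) : (∑ i, y i) / n ∈ Icc a b := by
  have hw : ∑ _i : Fin n, (n : ℝ)⁻¹ = 1 := by simp [hn.ne']
  simpa [div_eq_inv_mul, Finset.mul_sum] using
    (convex_Icc a b).sum_mem (fun _ _ => by positivity) hw fun i _ => hy i

lemma abs_sum_div_sub_div_eq {n : ℕ} (hn : 0 < n) (y : Fin n → ℝ) (x : ℝ) {s : ℝ}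
    (hs : 0 < s) : |(∑ i, y i) / n - x| / s = |∑ i, (y i - x) / s| / √n / √n := by
  have hn' : (0 : ℝ) < n := Nat.cast_pos.2 hn
  rw [div_div, Real.mul_self_sqrt hn'.le, ← Finset.sum_div, Finset.sum_sub_distrib,
    Finset.sum_const, Finset.card_univ, Fintype.card_fin, nsmul_eq_mul, abs_div, abs_of_pos hs,
    div_div, mul_comm s, ← div_div, ← abs_of_pos hn', ← abs_div, abs_of_pos hn', sub_div,
    mul_div_cancel_left₀ _ hn'.ne']

section TailComparison

variable {ρ ν : Measure ℝ}

lemma measure_Ici_le_of_measure_Ioi_le (hν : ν (Ioi 0) ≠ ∞)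
    (htail : ∀ u, 0 ≤ u → ρ (Ioi u) ≤ ν (Ioi u)) {c : ℝ} (hc : 0 < c) :
    ρ (Ici c) ≤ ν (Ici c) := by
  have hIci : ⋂ r > (0 : ℝ), Ioi (c - r) = Ici c := by
    ext z
    simp only [mem_iInter, mem_Ioi, mem_Ici, sub_lt_comm]
    exact ⟨fun h => le_of_forall_pos_lt_add fun r hr => by linarith [h r hr],
      fun h r hr => by linarith⟩
  have hlim : Tendsto (fun r => ν (Ioi (c - r))) (𝓝[>] 0) (𝓝 (ν (Ici c))) := by
    rw [← hIci]
    exact tendsto_measure_biInter_gt (fun r _ => measurableSet_Ioi.nullMeasurableSet)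
      (fun i j _ hij => Ioi_subset_Ioi (by linarith)) ⟨c, hc, by rwa [sub_self]⟩
  refine ge_of_tendsto hlim ?_
  filter_upwards [Ioo_mem_nhdsGT hc] with r hr
  calc ρ (Ici c) ≤ ρ (Ioi (c - r)) := measure_mono (Ici_subset_Ioi.2 (by linarith [hr.1]))
    _ ≤ ν (Ioi (c - r)) := htail _ (by linarith [hr.2])

lemma measure_le_of_isUpperSet (hν : ν (Ioi 0) ≠ ∞)
    (htail : ∀ u, 0 ≤ u → ρ (Ioi u) ≤ ν (Ioi u)) {A : Set ℝ} (hA : IsUpperSet A)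
    (hA0 : A ⊆ Ioi 0) : ρ A ≤ ν A := by
  rcases A.eq_empty_or_nonempty with rfl | hne
  · simp
  have hbdd : BddBelow A := ⟨0, fun z hz => (hA0 hz).le⟩
  by_cases hmin : sInf A ∈ A
  · have : A = Ici (sInf A) :=
      subset_antisymm (fun z hz => csInf_le hbdd hz) (hA.Ici_subset hmin)
    rw [this]
    exact measure_Ici_le_of_measure_Ioi_le hν htail (hA0 hmin)
  · have : A = Ioi (sInf A) := by
      refine subset_antisymm (fun z hz => (csInf_le hbdd hz).lt_of_ne ?_) fun z hz => ?_
      · rintro rfl; exact hmin hz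
      · obtain ⟨w, hw, hwz⟩ := exists_lt_of_csInf_lt hne hz
        exact hA hwz.le hw
    rw [this]
    exact htail _ (le_csInf hne fun z hz => (hA0 hz).le)

lemma lintegral_le_of_measure_Ioi_le (hν : ν (Ioi 0) ≠ ∞)
    (htail : ∀ u, 0 ≤ u → ρ (Ioi u) ≤ ν (Ioi u)) {g : ℝ → ℝ} (hg : Monotone g)
    (hg_nonneg : 0 ≤ g) (hg0 : g 0 = 0) :
    ∫⁻ z, ENNReal.ofReal (g z) ∂ρ ≤ ∫⁻ z, ENNReal.ofReal (g z) ∂ν := by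
  rw [lintegral_eq_lintegral_meas_lt ρ (ae_of_all _ hg_nonneg) hg.measurable.aemeasurable,
    lintegral_eq_lintegral_meas_lt ν (ae_of_all _ hg_nonneg) hg.measurable.aemeasurable]
  refine setLIntegral_mono' measurableSet_Ioi fun t (ht : 0 < t) =>
    measure_le_of_isUpperSet hν htail (fun z z' hzz' hz => hz.trans_le (hg hzz')) ?_
  intro z (hz : t < g z)
  by_contra! h
  linarith [hg (not_lt.1 h)]

lemma StieltjesFunction.measure_Ioi_of_eq_neg {F : StieltjesFunction ℝ} {q : ℝ → ℝ}
    (hF : ∀ u, 0 ≤ u → F u = -q u) (hq : Tendsto q atTop (𝓝 0)) {u : ℝ} (hu : 0 ≤ u) :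
    F.measure (Ioi u) = ENNReal.ofReal (q u) := by
  have hF0 : Tendsto F atTop (𝓝 0) := by
    simpa using hq.neg.congr' ((eventually_ge_atTop 0).mono fun v hv => (hF v hv).symm)
  rw [F.measure_Ioi hF0, hF u hu, zero_sub, neg_neg]

end TailComparison

section Probability

variable {Ω : Type*} [MeasurableSpace Ω] {μ : Measure Ω}

lemma exists_pos_measure_le_of_integral_eq_zero {ζ : Ω → ℝ} (hint : Integrable ζ μ)
    (hmean : μ[ζ] = 0) (hne : ¬ ζ =ᵐ[μ] 0) : ∃ ε > 0, 0 < μ {ω | ε ≤ ζ ω} := by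
  have hpos : μ {ω | 0 < ζ ω} ≠ 0 := fun h => hne <| by
    have hle : 0 ≤ᵐ[μ] -ζ := by
      rw [EventuallyLE, ae_iff]
      simpa using h
    have hzero : ∫ ω, (-ζ) ω ∂μ = 0 := by rw [Pi.neg_def, integral_neg, hmean, neg_zero]
    filter_upwards [(integral_eq_zero_iff_of_nonneg_ae hle hint.neg).1 hzero] with ω h
    simpa using h
  have hunion : {ω | 0 < ζ ω} = ⋃ k : ℕ, {ω | 1 / ((k : ℝ) + 1) ≤ ζ ω} := by
    ext ω
    simp only [mem_ofPred_eq, mem_iUnion]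
    exact ⟨fun h => (exists_nat_one_div_lt h).imp fun _ => le_of_lt,
      fun ⟨k, hk⟩ => lt_of_lt_of_le Nat.one_div_pos_of_nat hk⟩
  obtain ⟨k, hk⟩ := exists_measure_pos_of_not_measure_iUnion_null (hunion ▸ hpos)
  exact ⟨_, Nat.one_div_pos_of_nat, hk⟩

lemma integral_standardize [IsProbabilityMeasure μ] {X : Ω → ℝ} (hX : Integrable X μ)
    {m : ℝ} (hmean : μ[X] = m) (s : ℝ) : ∫ ω, (X ω - m) / s ∂μ = 0 := by
  rw [integral_div, integral_sub hX (integrable_const m), hmean]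
  simp

lemma variance_standardize [IsProbabilityMeasure μ] {X : Ω → ℝ} (hX : Integrable X μ)
    {m s : ℝ} (hs : s ≠ 0) (hmean : μ[X] = m) (hvar : ∫ ω, (X ω - m) ^ 2 ∂μ = s ^ 2) :
    variance (fun ω => (X ω - m) / s) μ = 1 := by
  rw [variance_eq_integral (by fun_prop), integral_standardize hX hmean s]
  simp_rw [sub_zero, div_pow]
  rw [integral_div, hvar, div_self (pow_ne_zero 2 hs)]

lemma integrable_comp_of_continuousOn_Icc [IsFiniteMeasure μ] {f : ℝ → ℝ} {a b M : ℝ}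
    (hab : a ≤ b) (hf : ContinuousOn f (Icc a b)) (hfM : ∀ y ∈ Icc a b, |f y| ≤ M)
    {S : Ω → ℝ} (hS : Measurable S) (hSab : ∀ ω, S ω ∈ Icc a b) :
    Integrable (fun ω => f (S ω)) μ := by
  have hfS : (fun ω => f (S ω)) = fun ω => f (dtClamp a b (S ω)) :=
    funext fun ω => by rw [dtClamp_of_mem (hSab ω)]
  have hcont : Continuous fun y => f (dtClamp a b y) :=
    hf.comp_continuous (by unfold dtClamp; fun_prop) (dtClamp_mem hab)
  refine Integrable.of_bound (hfS ▸ (hcont.measurable.comp hS).aestronglyMeasurable) M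
    (ae_of_all _ fun ω => ?_)
  exact (Real.norm_eq_abs _).trans_le (hfM _ (hSab ω))

lemma lintegral_comp_le_setLIntegral_of_measure_lt_le {ν : Measure ℝ} {Z : Ω → ℝ}
    (hZ : Measurable Z) (hν : ν (Ioi 0) ≠ ∞)
    (htail : ∀ u, 0 ≤ u → μ {ω | u < Z ω} ≤ ν (Ioi u)) {g : ℝ → ℝ} (hg : Monotone g)
    (hg_nonneg : 0 ≤ g) (hg0 : g 0 = 0) :
    ∫⁻ ω, ENNReal.ofReal (g (Z ω)) ∂μ ≤ ∫⁻ z in Ioi 0, ENNReal.ofReal (g z) ∂ν := by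
  have hsupp : (fun z => ENNReal.ofReal (g z)).support ⊆ Ioi 0 := fun z hz => by
    by_contra! h
    exact hz (by rw [ENNReal.ofReal_eq_zero, ← hg0]; exact hg (not_lt.1 h))
  rw [← lintegral_map (f := fun z => ENNReal.ofReal (g z))
    (ENNReal.measurable_ofReal.comp hg.measurable) hZ, setLIntegral_eq_of_support_subset hsupp]
  refine lintegral_le_of_measure_Ioi_le hν (fun u hu => ?_) hg hg_nonneg hg0
  rw [Measure.map_apply hZ measurableSet_Ioi]
  exact htail u hu

lemma abs_integral_sub_le_of_measure_lt_le [IsProbabilityMeasure μ] {F Z : Ω → ℝ} {c : ℝ}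
    (hF : Integrable F μ) (hZ : Measurable Z) {ν : Measure ℝ} (hν : ν (Ioi 0) ≠ ∞)
    (htail : ∀ u, 0 ≤ u → μ {ω | u < Z ω} ≤ ν (Ioi u)) {g : ℝ → ℝ} (hg : Monotone g)
    (hg_nonneg : 0 ≤ g) (hg0 : g 0 = 0) {C : ℝ} (hgC : ∀ z, g z ≤ C)
    (hFg : ∀ ω, |F ω - c| ≤ g (Z ω)) :
    |∫ ω, F ω ∂μ - c| ≤ (∫⁻ z in Ioi 0, ENNReal.ofReal (g z) ∂ν).toReal := by
  have hfin : ∫⁻ z in Ioi 0, ENNReal.ofReal (g z) ∂ν ≠ ∞ :=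
    ne_top_of_le_ne_top (ENNReal.mul_ne_top ENNReal.ofReal_ne_top hν)
      ((lintegral_mono fun z => ENNReal.ofReal_le_ofReal (hgC z)).trans_eq
        (setLIntegral_const _ _))
  refine (ENNReal.ofReal_le_iff_le_toReal hfin).1 ?_
  calc ENNReal.ofReal |∫ ω, F ω ∂μ - c| = ‖∫ ω, (F ω - c) ∂μ‖ₑ := by
        rw [integral_sub hF (integrable_const c), integral_const, Real.enorm_eq_ofReal_abs]
        simp
    _ ≤ ∫⁻ ω, ‖F ω - c‖ₑ ∂μ := enorm_integral_le_lintegral_enorm _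
    _ ≤ ∫⁻ ω, ENNReal.ofReal (g (Z ω)) ∂μ := lintegral_mono fun ω => by
        rw [Real.enorm_eq_ofReal_abs]
        exact ENNReal.ofReal_le_ofReal (hFg ω)
    _ ≤ _ := lintegral_comp_le_setLIntegral_of_measure_lt_le hZ hν htail hg hg_nonneg hg0

/-- The absolute tail function `Q_ζ` of the paper, when `η` is a sequence of independent copies
of `ζ`. -/
noncomputable def absTail (μ : Measure Ω) (η : ℕ → Ω → ℝ) (u : ℝ) : ℝ≥0∞ :=
  ⨆ m : ℕ, μ {ω | |∑ i ∈ Finset.range (m + 1), η i ω| / Real.sqrt (m + 1) > u}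

lemma absTail_le_one [IsProbabilityMeasure μ] (η : ℕ → Ω → ℝ) (u : ℝ) : absTail μ η u ≤ 1 :=
  iSup_le fun _ => prob_le_one

lemma absTail_le_ofReal_inv_sq [IsProbabilityMeasure μ] {η : ℕ → Ω → ℝ}
    (hL2 : ∀ i, MemLp (η i) 2 μ) (hindep : iIndepFun η μ) (hmean : ∀ i, μ[η i] = 0)
    (hvar : ∀ i, variance (η i) μ = 1) {u : ℝ} (hu : 0 < u) :
    absTail μ η u ≤ ENNReal.ofReal (1 / u ^ 2) := by
  refine iSup_le fun m => ?_
  set T := ∑ i ∈ Finset.range (m + 1), η i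
  have hsqrt : 0 < √((m : ℝ) + 1) := by positivity
  have hT_mean : μ[T] = 0 := by
    simp [T, integral_finsetSum _ fun i _ => (hL2 i).integrable one_le_two, hmean]
  have hT_var : variance T μ = m + 1 := by
    rw [IndepFun.variance_sum (fun i _ => hL2 i) fun i _ j _ hij => hindep.indepFun hij]
    simp [hvar]
  calc μ {ω | |∑ i ∈ Finset.range (m + 1), η i ω| / √((m : ℝ) + 1) > u}
      ≤ μ {ω | u * √((m : ℝ) + 1) ≤ |T ω - μ[T]|} := measure_mono fun ω hω => by
        simp only [mem_ofPred_eq, gt_iff_lt, lt_div_iff₀ hsqrt] at hω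
        rw [mem_ofPred_eq, hT_mean, sub_zero]
        simpa only [T, Finset.sum_apply] using hω.le
    _ ≤ ENNReal.ofReal (variance T μ / (u * √((m : ℝ) + 1)) ^ 2) :=
        meas_ge_le_variance_div_sq (memLp_finsetSum' _ fun i _ => hL2 i) (by positivity)
    _ = ENNReal.ofReal (1 / u ^ 2) := by
        rw [hT_var, mul_pow, Real.sq_sqrt (by positivity)]
        field_simp

/-- With probability at least `δ ^ (m + 1)` all of `η 0, …, η m` are at least `ε`, and then the
normalized sum is at least `ε √(m + 1)`, which exceeds `u` for large `m`. -/
lemma absTail_pos [IsProbabilityMeasure μ] {η : ℕ → Ω → ℝ} {ζ : Ω → ℝ}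
    (hindep : iIndepFun η μ) (hident : ∀ i, IdentDistrib (η i) ζ μ μ) {ε : ℝ} (hε : 0 < ε)
    (hpos : 0 < μ {ω | ε ≤ ζ ω}) (u : ℝ) : 0 < absTail μ η u := by
  obtain ⟨m, hm⟩ := exists_nat_gt ((u / ε) ^ 2)
  have hsqrt : 0 < √((m : ℝ) + 1) := by positivity
  have hu : u < ε * √((m : ℝ) + 1) := by
    rw [← div_lt_iff₀' hε]
    exact Real.lt_sqrt_of_sq_lt (by linarith)
  have hall : 0 < μ (⋂ i ∈ Finset.range (m + 1), η i ⁻¹' Ici ε) := by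
    rw [hindep.measure_inter_preimage_eq_mul _ fun _ _ => measurableSet_Ici]
    refine CanonicallyOrderedAdd.prod_pos.2 fun i _ => ?_
    rwa [(hident i).measure_mem_eq measurableSet_Ici]
  refine hall.trans_le (le_iSup_of_le m (measure_mono fun ω hω => ?_))
  simp only [mem_iInter, mem_preimage, mem_Ici] at hω
  have hsum : ((m : ℝ) + 1) * ε ≤ ∑ i ∈ Finset.range (m + 1), η i ω := by
    simpa using Finset.card_nsmul_le_sum _ _ _ hω
  rw [mem_ofPred_eq, gt_iff_lt, lt_div_iff₀ hsqrt]
  calc u * √((m : ℝ) + 1) < ε * √((m : ℝ) + 1) * √((m : ℝ) + 1) := by gcongr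
    _ = ((m : ℝ) + 1) * ε := by rw [mul_assoc, Real.mul_self_sqrt (by positivity), mul_comm]
    _ ≤ _ := hsum.trans (le_abs_self _)

lemma tendsto_atTop_zero_of_ofReal_eq_absTail [IsProbabilityMeasure μ] {η : ℕ → Ω → ℝ}
    {ζ : Ω → ℝ} (hindep : iIndepFun η μ) (hident : ∀ i, IdentDistrib (η i) ζ μ μ)
    (hζ : MemLp ζ 2 μ) (hmean : μ[ζ] = 0) (hvar : variance ζ μ = 1) {q : ℝ → ℝ}
    (hq : ∀ u, 0 ≤ u → ENNReal.ofReal (q u) = absTail μ η u) :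
    Tendsto q atTop (𝓝 0) := by
  obtain ⟨ε, hε, hpos⟩ := exists_pos_measure_le_of_integral_eq_zero (hζ.integrable one_le_two)
    hmean fun h => by simp [variance_congr h, variance_zero] at hvar
  -- `ofReal` clips negative values, so `0 ≤ q` needs the positivity of `absTail`.
  have hlower : ∀ u, 0 ≤ u → 0 ≤ q u := fun u hu =>
    (ENNReal.ofReal_pos.1 ((hq u hu).symm ▸ absTail_pos hindep hident hε hpos u)).le
  have hupper : ∀ u, 0 < u → q u ≤ 1 / u ^ 2 := fun u hu =>
    (ENNReal.ofReal_le_ofReal_iff (by positivity)).1 <| (hq u hu.le).trans_le <|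
      absTail_le_ofReal_inv_sq (fun i => (hident i).memLp_iff.2 hζ) hindep
        (fun i => (hident i).integral_eq.trans hmean)
        (fun i => (hident i).variance_eq.trans hvar) hu
  have hinv_sq : Tendsto (fun u : ℝ => 1 / u ^ 2) atTop (𝓝 0) := by
    simpa only [one_div, Function.comp_def] using
      tendsto_inv_atTop_zero.comp (tendsto_pow_atTop two_ne_zero)
  exact tendsto_of_tendsto_of_tendsto_of_le_of_le' tendsto_const_nhds hinv_sq
    ((eventually_ge_atTop 0).mono hlower) ((eventually_gt_atTop 0).mono hupper)

lemma measure_lt_abs_sum_div_le_absTail {n : ℕ} (hn : 0 < n) {ζ : Fin n → Ω → ℝ}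
    {η : ℕ → Ω → ℝ} (hζ : iIndepFun ζ μ) (hη : iIndepFun η μ)
    (hident : ∀ i, IdentDistrib (ζ i) (η i) μ μ) (u : ℝ) :
    μ {ω | u < |∑ i, ζ i ω| / √n} ≤ absTail μ η u := by
  obtain ⟨m, rfl⟩ := Nat.exists_eq_add_one.2 hn
  have hsum := (IdentDistrib.pi hident hζ (hη.precomp Fin.val_injective)).comp
    (show Measurable fun v : Fin (m + 1) → ℝ => |∑ i, v i| / √((m + 1 : ℕ) : ℝ) by fun_prop)
  refine (hsum.measure_mem_eq measurableSet_Ioi).trans_le (le_iSup_of_le m ?_)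
  refine le_of_eq (congrArg μ (ext fun ω => ?_))
  simp [Fin.sum_univ_eq_sum_range (fun i => η i ω)]

end Probability

/-- Theorem 3.1: `sup_{x ∈ I} |E[f(Sₙ)] − f(x)| ≤ ∫_0^∞ ω_σ[f](z/√n) |dQ_ζ(z)|`, where
`Q_ζ(u) = sup_m P(m^{-1/2}|∑_{i≤m} ζ(i)| > u)` is the absolute tail function of the
standardized variable `ζ = (ξ₁ − x)/σ(x)` and the integral is the Lebesgue–Stieltjes
integral against the non-increasing function `Q_ζ`. -/
theorem bernstein_type_sup_bound_via_ATF
    {Ω : Type*} [MeasurableSpace Ω] (μ : Measure Ω) [IsProbabilityMeasure μ]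
    (n : ℕ) (hn : 0 < n) (a b : ℝ) (hab : a ≤ b) (σ : ℝ → ℝ)
    (ξ : ℝ → Fin n → Ω → ℝ) (η : ℝ → ℕ → Ω → ℝ)
    (Q : ℝ → ℝ → ℝ) (negQ : ℝ → StieltjesFunction ℝ)
    (f : ℝ → ℝ) (hfu : UniformContinuousOn f (Icc a b))
    (M : ℝ) (hfM : ∀ y ∈ Icc a b, |f y| ≤ M)
    (hmeas : ∀ x ∈ Icc a b, ∀ i, Measurable (ξ x i))
    (hrange : ∀ x ∈ Icc a b, ∀ i, ∀ ω, ξ x i ω ∈ Icc a b)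
    (hindep : ∀ x ∈ Icc a b, iIndepFun (ξ x) μ)
    (hident : ∀ x ∈ Icc a b, ∀ i j, μ.map (ξ x i) = μ.map (ξ x j))
    (hmean : ∀ x ∈ Icc a b, ∀ i, ∫ ω, ξ x i ω ∂μ = x)
    (hσpos : ∀ x ∈ Icc a b, 0 < σ x)
    (hvar : ∀ x ∈ Icc a b, ∀ i, ∫ ω, (ξ x i ω - x) ^ 2 ∂μ = (σ x) ^ 2)
    (hηmeas : ∀ x ∈ Icc a b, ∀ i, Measurable (η x i))
    (hηindep : ∀ x ∈ Icc a b, iIndepFun (η x) μ)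
    (hηident : ∀ x ∈ Icc a b, ∀ i,
      μ.map (η x i) = μ.map (fun ω => (ξ x ⟨0, hn⟩ ω - x) / σ x))
    (hQ : ∀ x ∈ Icc a b, ∀ u, 0 ≤ u →
      ENNReal.ofReal (Q x u)
        = ⨆ m : ℕ, μ {ω | |∑ i ∈ Finset.range (m + 1), η x i ω|
            / Real.sqrt (m + 1) > u})
    (hnegQ : ∀ x ∈ Icc a b, ∀ z, 0 ≤ z → (negQ x) z = -(Q x z)) :
    ∀ x ∈ Icc a b,
      |(∫ ω, f ((∑ i, ξ x i ω) / n) ∂μ) - f x|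
        ≤ (∫⁻ z in Ioi (0 : ℝ),
            ENNReal.ofReal (dtMod f σ a b (z / Real.sqrt n)) ∂(negQ x).measure).toReal := by
  intro x hx
  have hσ := hσpos x hx
  set ζ : Fin n → Ω → ℝ := fun i ω => (ξ x i ω - x) / σ x
  have hφ : Measurable fun y => (y - x) / σ x := by fun_prop
  have hη : ∀ i, IdentDistrib (η x i) (ζ ⟨0, hn⟩) μ μ := fun i =>
    ⟨(hηmeas x hx i).aemeasurable, (hφ.comp (hmeas x hx _)).aemeasurable, hηident x hx i⟩
  have hζ : ∀ i, IdentDistrib (ζ i) (η x i) μ μ := fun i =>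
    (IdentDistrib.comp ⟨(hmeas x hx i).aemeasurable, (hmeas x hx _).aemeasurable,
      hident x hx i ⟨0, hn⟩⟩ hφ).trans (hη i).symm
  have hζindep : iIndepFun ζ μ := (hindep x hx).comp _ fun _ => hφ
  have hξ₀ : MemLp (ξ x ⟨0, hn⟩) 2 μ :=
    memLp_of_bounded (ae_of_all _ (hrange x hx _)) (hmeas x hx _).aestronglyMeasurable 2
  have hζ₀ : MemLp (ζ ⟨0, hn⟩) 2 μ := (hξ₀.sub (memLp_const x)).mul_const (σ x)⁻¹
  have hν : ∀ u, 0 ≤ u → (negQ x).measure (Ioi u) = absTail μ (η x) u := fun u hu =>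
    ((negQ x).measure_Ioi_of_eq_neg (hnegQ x hx) (tendsto_atTop_zero_of_ofReal_eq_absTail
      (hηindep x hx) hη hζ₀
      (integral_standardize (hξ₀.integrable one_le_two) (hmean x hx _) _)
      (variance_standardize (hξ₀.integrable one_le_two) hσ.ne' (hmean x hx _) (hvar x hx _))
      (hQ x hx)) hu).trans (hQ x hx u hu)
  have hSn : ∀ ω, (∑ i, ξ x i ω) / n ∈ Icc a b := fun ω => sum_div_mem_Icc hn (hrange x hx · ω)
  refine abs_integral_sub_le_of_measure_lt_le
    (integrable_comp_of_continuousOn_Icc hab hfu.continuousOn hfM (by fun_prop) hSn)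
    (by fun_prop) (hν 0 le_rfl ▸ ((absTail_le_one _ 0).trans_lt ENNReal.one_lt_top).ne)
    (fun u hu => hν u hu ▸ measure_lt_abs_sum_div_le_absTail hn hζindep (hηindep x hx) hζ u)
    (fun z z' h => dtMod_mono hab hfM (by gcongr)) (fun _ => dtMod_nonneg _)
    (by simp only [zero_div, dtMod_zero]) (fun _ => dtMod_le hab hfM _) fun ω => ?_
  rw [← abs_sum_div_sub_div_eq hn _ x hσ]
  exact abs_sub_le_dtMod hab hfM hx (hSn ω) hσ
end

section
/- For the Szász–Mirakyan (Poisson) operator S_n[f](x) = e^{−nx} ∑_{k=0}^∞ (nx)^k/k! · f(k/n), one has S_n[f](x) = E[f(P_{nx}/n)] where P_{nx} is Poisson with mean nx; consequently, for f Hölder of order α ∈ (0,1] with constant H, |S_n[f](x) − f(x)| ≤ H (x/n)^{α/2} for all x ≥ 0. -/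
/-!
Summing the Poisson weights against `f (k / n)` is the expectation `E f(P_{nx}/n)`. By the Hölder
condition, `|S_n f(x) - f(x)| ≤ H E|P_{nx}/n - x|^α`, and Jensen's inequality for the concave map
`t ↦ t^{α/2}` bounds `E|P_{nx}/n - x|^α = E((P_{nx}/n - x)²)^{α/2}` by
`Var(P_{nx}/n)^{α/2} = (x/n)^{α/2}`.
The variance is read off the factorial moments `E[P_r (P_r - 1) ⋯ (P_r - j + 1)] = r^j`.
-/

open Set MeasureTheory ProbabilityTheory Real
open scoped NNReal Nat

lemma Real.rpow_le_one_add {x p : ℝ} (hx : 0 ≤ x) (hp₀ : 0 ≤ p) (hp₁ : p ≤ 1) :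
    x ^ p ≤ 1 + x := by
  rcases le_total x 1 with h | h
  · linarith [rpow_le_one hx h hp₀]
  · have := rpow_le_rpow_of_exponent_le h hp₁
    rw [rpow_one] at this
    linarith

section Jensen

variable {Ω : Type*} {mΩ : MeasurableSpace Ω} {μ : Measure Ω} {f : Ω → ℝ} {p : ℝ}

lemma MeasureTheory.Integrable.rpow_of_le_one [IsFiniteMeasure μ] (hfi : Integrable f μ)
    (hf : 0 ≤ᵐ[μ] f) (hp₀ : 0 ≤ p) (hp₁ : p ≤ 1) :
    Integrable (fun ω ↦ f ω ^ p) μ := by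
  refine ((integrable_const 1).add hfi).mono'
    (hfi.aestronglyMeasurable.aemeasurable.pow_const p).aestronglyMeasurable ?_
  filter_upwards [hf] with ω hω
  rw [norm_of_nonneg (rpow_nonneg hω p)]
  exact rpow_le_one_add hω hp₀ hp₁

lemma integral_rpow_le_rpow_integral [IsProbabilityMeasure μ] (hfi : Integrable f μ)
    (hf : 0 ≤ᵐ[μ] f) (hp₀ : 0 ≤ p) (hp₁ : p ≤ 1) :
    ∫ ω, f ω ^ p ∂μ ≤ (∫ ω, f ω ∂μ) ^ p :=
  (concaveOn_rpow hp₀ hp₁).le_map_integral (continuousOn_id.rpow_const fun _ _ ↦ Or.inr hp₀)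
    isClosed_Ici hf hfi (hfi.rpow_of_le_one hf hp₀ hp₁)

end Jensen

lemma hasSum_poisson_descFactorial (r : ℝ≥0) (j : ℕ) :
    HasSum (fun k : ℕ ↦ exp (-r) * r ^ k / k ! * k.descFactorial j) ((r : ℝ) ^ j) := by
  rw [← hasSum_nat_add_iff' j]
  have hlow : ∑ k ∈ Finset.range j, exp (-r) * r ^ k / k ! * (k.descFactorial j : ℝ) = 0 :=
    Finset.sum_eq_zero fun k hk ↦ by
      rw [Nat.descFactorial_eq_zero_iff_lt.mpr (Finset.mem_range.mp hk)]; simp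
  rw [hlow, sub_zero]
  have hterm (i : ℕ) : exp (-r) * r ^ (i + j) / (i + j)! * ((i + j).descFactorial j : ℝ)
      = r ^ j * (exp (-r) * r ^ i / i !) := by
    have hfac := Nat.factorial_mul_descFactorial (Nat.le_add_left j i)
    rw [Nat.add_sub_cancel] at hfac
    have : ((i + j).descFactorial j : ℝ) ≠ 0 := by
      exact_mod_cast (Nat.descFactorial_pos.mpr (Nat.le_add_left j i)).ne'
    rw [← hfac]
    push_cast
    field_simp
    ring
  simpa only [hterm, mul_one] using (hasSum_one_poissonMeasure r).mul_left ((r : ℝ) ^ j)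

lemma hasSum_poisson_natCast_sub_sq (r : ℝ≥0) :
    HasSum (fun k : ℕ ↦ exp (-r) * r ^ k / k ! * ((k : ℝ) - r) ^ 2) r := by
  have h := ((hasSum_poisson_descFactorial r 2).add
    ((hasSum_poisson_descFactorial r 1).mul_left (1 - 2 * (r : ℝ)))).add
    ((hasSum_poisson_descFactorial r 0).mul_left ((r : ℝ) ^ 2))
  simp only [Nat.cast_descFactorial_two, Nat.descFactorial_one, Nat.descFactorial_zero] at h
  convert h using 1
  · funext k
    ring
  · ring

lemma integrable_poissonMeasure_natCast_sub_sq (r : ℝ≥0) :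
    Integrable (fun k : ℕ ↦ ((k : ℝ) - r) ^ 2) Po(r) := by
  simpa only [integrable_poissonMeasure_iff, norm_pow, Real.norm_eq_abs, sq_abs]
    using (hasSum_poisson_natCast_sub_sq r).summable

lemma integral_poissonMeasure_natCast_sub_sq (r : ℝ≥0) :
    ∫ k, ((k : ℝ) - r) ^ 2 ∂Po(r) = r := by
  rw [integral_poissonMeasure' (integrable_poissonMeasure_natCast_sub_sq r)]
  exact (hasSum_poisson_natCast_sub_sq r).tsum_eq

lemma integral_poissonMeasure_eq_exp_mul_tsum {r : ℝ≥0} {g : ℕ → ℝ}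
    (hg : Integrable g Po(r)) :
    ∫ k, g k ∂Po(r) = exp (-r) * ∑' k : ℕ, (r : ℝ) ^ k / k ! * g k := by
  rw [integral_poissonMeasure' hg, ← tsum_mul_left]
  congr 1 with k
  rw [smul_eq_mul]
  ring

section Holder

variable {Ω : Type*} {mΩ : MeasurableSpace Ω} {μ : Measure Ω} {f : ℝ → ℝ} {s : Set ℝ}
  {X : Ω → ℝ} {c H α : ℝ}

lemma integrable_comp_of_holder [IsFiniteMeasure μ]
    (hf : ∀ u ∈ s, ∀ v ∈ s, |f u - f v| ≤ H * |u - v| ^ α) (hc : c ∈ s)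
    (hXs : ∀ᵐ ω ∂μ, X ω ∈ s) (hfX : AEStronglyMeasurable (fun ω ↦ f (X ω)) μ)
    (hXi : Integrable (fun ω ↦ |X ω - c| ^ α) μ) :
    Integrable (fun ω ↦ f (X ω)) μ := by
  refine ((integrable_const |f c|).add (hXi.const_mul H)).mono' hfX ?_
  filter_upwards [hXs] with ω hω
  rw [Pi.add_apply, Real.norm_eq_abs]
  linarith [abs_sub_abs_le_abs_sub (f (X ω)) (f c), hf _ hω _ hc]

lemma abs_integral_comp_sub_le_of_holder [IsProbabilityMeasure μ]
    (hf : ∀ u ∈ s, ∀ v ∈ s, |f u - f v| ≤ H * |u - v| ^ α) (hc : c ∈ s)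
    (hXs : ∀ᵐ ω ∂μ, X ω ∈ s) (hfXi : Integrable (fun ω ↦ f (X ω)) μ)
    (hXi : Integrable (fun ω ↦ |X ω - c| ^ α) μ) :
    |∫ ω, f (X ω) ∂μ - f c| ≤ H * ∫ ω, |X ω - c| ^ α ∂μ := by
  calc |∫ ω, f (X ω) ∂μ - f c|
      = |∫ ω, (f (X ω) - f c) ∂μ| := by
        rw [integral_sub hfXi (integrable_const _), integral_const, probReal_univ, one_smul]
    _ ≤ ∫ ω, |f (X ω) - f c| ∂μ := abs_integral_le_integral_abs
    _ ≤ ∫ ω, H * |X ω - c| ^ α ∂μ :=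
        integral_mono_ae (hfXi.sub (integrable_const _)).abs (hXi.const_mul H)
          (by filter_upwards [hXs] with ω hω using hf _ hω _ hc)
    _ = H * ∫ ω, |X ω - c| ^ α ∂μ := integral_const_mul H _

end Holder

section SzaszMirakyan

variable {n : ℕ} {x : ℝ≥0} {α : ℝ}

lemma abs_natCast_div_sub_rpow_eq (hn : n ≠ 0) (k : ℕ) :
    |(k : ℝ) / n - x| ^ α = (((k : ℝ) - (n * x : ℝ≥0)) ^ 2 / n ^ 2) ^ (α / 2) := by
  have hn' : (n : ℝ) ≠ 0 := Nat.cast_ne_zero.mpr hn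
  have hsq : ((k : ℝ) - (n * x : ℝ≥0)) ^ 2 / n ^ 2 = |(k : ℝ) / n - x| ^ (2 : ℝ) := by
    rw [rpow_two, sq_abs]
    push_cast
    field_simp
  rw [hsq, ← rpow_mul (abs_nonneg _)]
  ring_nf

lemma integrable_abs_natCast_div_sub_rpow (hn : n ≠ 0) (hα₀ : 0 ≤ α) (hα₂ : α ≤ 2) :
    Integrable (fun k : ℕ ↦ |(k : ℝ) / n - x| ^ α) Po(n * x) := by
  simp only [abs_natCast_div_sub_rpow_eq hn]
  exact ((integrable_poissonMeasure_natCast_sub_sq _).div_const _).rpow_of_le_one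
    (.of_forall fun k ↦ by positivity) (by linarith) (by linarith)

lemma integral_abs_natCast_div_sub_rpow_le (hn : n ≠ 0) (hα₀ : 0 ≤ α) (hα₂ : α ≤ 2) :
    ∫ k, |(k : ℝ) / n - x| ^ α ∂Po(n * x) ≤ ((x : ℝ) / n) ^ (α / 2) := by
  have hn' : (n : ℝ) ≠ 0 := Nat.cast_ne_zero.mpr hn
  have hvar : ∫ k, ((k : ℝ) - (n * x : ℝ≥0)) ^ 2 / n ^ 2 ∂Po(n * x) = (x : ℝ) / n := by
    rw [integral_div, integral_poissonMeasure_natCast_sub_sq]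
    push_cast
    field_simp
  simp only [abs_natCast_div_sub_rpow_eq hn]
  rw [← hvar]
  exact integral_rpow_le_rpow_integral ((integrable_poissonMeasure_natCast_sub_sq _).div_const _)
    (.of_forall fun k ↦ by positivity) (by linarith) (by linarith)

end SzaszMirakyan

theorem szasz_operator_representation_and_bound_general
    (n : ℕ) (hn : 0 < n) (x : NNReal)
    (f : ℝ → ℝ)
    (H α : ℝ) (hH : 0 ≤ H) (hα0 : 0 < α) (hα1 : α ≤ 1)
    (hHolder : ∀ u v : ℝ, 0 ≤ u → 0 ≤ v → |f u - f v| ≤ H * |u - v| ^ α) :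
    (Real.exp (-(n * x)) * ∑' k : ℕ, ((n * x : ℝ) ^ k / k.factorial) * f (k / n))
      = ∫ k, f ((k : ℝ) / n) ∂(poissonMeasure (n * x))
    ∧ |(Real.exp (-(n * x)) * ∑' k : ℕ, ((n * x : ℝ) ^ k / k.factorial) * f (k / n))
          - f x|
        ≤ H * ((x : ℝ) / n) ^ (α / 2) := by
  have hf : ∀ u ∈ Ici (0 : ℝ), ∀ v ∈ Ici 0, |f u - f v| ≤ H * |u - v| ^ α :=
    fun u hu v hv ↦ hHolder u v hu hv
  have hXs : ∀ᵐ (k : ℕ) ∂Po(n * x), (k : ℝ) / n ∈ Ici 0 :=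
    .of_forall fun k ↦ mem_Ici.mpr (by positivity)
  have hXi := integrable_abs_natCast_div_sub_rpow (x := x) hn.ne' hα0.le (by linarith)
  have hfXi := integrable_comp_of_holder hf x.coe_nonneg hXs
    StronglyMeasurable.of_discrete.aestronglyMeasurable hXi
  have hrep : Real.exp (-(n * x)) * ∑' k : ℕ, ((n * x : ℝ) ^ k / k.factorial) * f (k / n)
      = ∫ k, f ((k : ℝ) / n) ∂(poissonMeasure (n * x)) := by
    rw [integral_poissonMeasure_eq_exp_mul_tsum hfXi, NNReal.coe_mul, NNReal.coe_natCast]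
  refine ⟨hrep, hrep ▸ ?_⟩
  calc |∫ k, f ((k : ℝ) / n) ∂Po(n * x) - f x|
      ≤ H * ∫ k, |(k : ℝ) / n - x| ^ α ∂Po(n * x) :=
        abs_integral_comp_sub_le_of_holder hf x.coe_nonneg hXs hfXi hXi
    _ ≤ H * ((x : ℝ) / n) ^ (α / 2) :=
        mul_le_mul_of_nonneg_left
          (integral_abs_natCast_div_sub_rpow_le hn.ne' hα0.le (by linarith)) hH

/-- The Szász–Mirakyan operator `S_n[f](x) = e^{−nx} ∑_k (nx)^k/k! · f(k/n)` equals
`E[f(P_{nx}/n)]` for `P_{nx}` Poisson with mean `nx`; consequently for `f` Hölder of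
order `α` with constant `H`, `|S_n[f](x) − f(x)| ≤ H (x/n)^{α/2}` for all `x ≥ 0`. -/
theorem szasz_operator_representation_and_bound
    (n : ℕ) (hn : 0 < n) (x : NNReal)
    (f : ℝ → ℝ) (hfc : Continuous f)
    (Mf : ℝ) (hbdd : ∀ y : ℝ, 0 ≤ y → |f y| ≤ Mf)
    (H α : ℝ) (hH : 0 ≤ H) (hα0 : 0 < α) (hα1 : α ≤ 1)
    (hHolder : ∀ u v : ℝ, 0 ≤ u → 0 ≤ v → |f u - f v| ≤ H * |u - v| ^ α) :
    (Real.exp (-(n * x)) * ∑' k : ℕ, ((n * x : ℝ) ^ k / k.factorial) * f (k / n))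
      = ∫ k, f ((k : ℝ) / n) ∂(poissonMeasure (n * x))
    ∧ |(Real.exp (-(n * x)) * ∑' k : ℕ, ((n * x : ℝ) ^ k / k.factorial) * f (k / n))
          - f x|
        ≤ H * ((x : ℝ) / n) ^ (α / 2) :=
  szasz_operator_representation_and_bound_general n hn x f H α hH hα0 hα1 hHolder
end
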